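/- Let t₀ < t_f, M ≥ 0, let A_ℓ, Ã ∈ L²(t₀,t_f;ℝ^{m×n}) with A_ℓ → Ã strongly in L²(t₀,t_f;ℝ^{m×n}), and let u_ℓ, ũ ∈ L²(t₀,t_f;ℝⁿ) with u_ℓ → ũ weakly in L²(t₀,t_f;ℝⁿ) and ‖u_ℓ(t)‖₂ ≤ M for a.e. t ∈ [t₀,t_f] and all ℓ. Then the products A_ℓ u_ℓ converge weakly to Ã ũ in L²(t₀,t_f;ℝ^m). -/

import Mathlib

open MeasureTheory Set Filter Metric Topology
open scoped RealInnerProductSpace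

/-- Matrix–vector multiplication for Euclidean-space vectors. -/
noncomputable def mulVecE {m n : ℕ} (M : Matrix (Fin m) (Fin n) ℝ)
    (v : EuclideanSpace ℝ (Fin n)) : EuclideanSpace ℝ (Fin m) :=
  (WithLp.equiv 2 (Fin m → ℝ)).symm (M.mulVec ((WithLp.equiv 2 (Fin n → ℝ)) v))

/-- Frobenius norm of a real matrix. -/
noncomputable def frobNorm {m n : ℕ} (M : Matrix (Fin m) (Fin n) ℝ) : ℝ :=
  Real.sqrt (∑ i, ∑ j, (M i j) ^ 2)

/-!
Split `A_ℓ u_ℓ = (A_ℓ - Ã) u_ℓ + Ã u_ℓ`. Since `‖u_ℓ‖ ≤ M`, the first term is bounded in `L²` by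
`M ‖A_ℓ - Ã‖_{L²} → 0`. Against a test function `w` the second term gives `∫ ⟪u_ℓ, Ãᵀ w⟫`, where
`Ãᵀ w` is only integrable, not square integrable. But the weak limit `ũ` inherits the bound `M`
(test against `ũ` restricted to `{‖ũ‖ > M}`), and a sequence bounded by `M` in `L^∞` that converges
weakly in `L²` also converges against `L¹` test functions, because these are `L¹`-limits of simple
functions.
-/

open Matrix

section Frobenius

variable {m n : ℕ}

lemma frobNorm_nonneg (A : Matrix (Fin m) (Fin n) ℝ) : 0 ≤ frobNorm A := Real.sqrt_nonneg _

lemma sq_frobNorm (A : Matrix (Fin m) (Fin n) ℝ) : frobNorm A ^ 2 = ∑ i, ∑ j, A i j ^ 2 :=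
  Real.sq_sqrt (by positivity)

lemma frobNorm_transpose (A : Matrix (Fin m) (Fin n) ℝ) : frobNorm Aᵀ = frobNorm A := by
  rw [frobNorm, frobNorm, Finset.sum_comm]
  rfl

lemma sq_frobNorm_sub_le (A B : Matrix (Fin m) (Fin n) ℝ) :
    frobNorm (A - B) ^ 2 ≤ 2 * frobNorm A ^ 2 + 2 * frobNorm B ^ 2 := by
  simp only [sq_frobNorm, Finset.mul_sum, ← Finset.sum_add_distrib]
  gcongr with i _ j _
  rw [Matrix.sub_apply]
  nlinarith [sq_nonneg (A i j + B i j)]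

lemma continuous_frobNorm : Continuous (frobNorm : Matrix (Fin m) (Fin n) ℝ → ℝ) := by
  unfold frobNorm
  fun_prop

lemma mulVecE_apply (A : Matrix (Fin m) (Fin n) ℝ) (v : EuclideanSpace ℝ (Fin n)) (i : Fin m) :
    mulVecE A v i = ∑ j, A i j * v j :=
  rfl

lemma sub_mulVecE (A B : Matrix (Fin m) (Fin n) ℝ) (v : EuclideanSpace ℝ (Fin n)) :
    mulVecE (A - B) v = mulVecE A v - mulVecE B v := by
  simp [mulVecE, Matrix.sub_mulVec]

lemma norm_mulVecE_le (A : Matrix (Fin m) (Fin n) ℝ) (v : EuclideanSpace ℝ (Fin n)) :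
    ‖mulVecE A v‖ ≤ frobNorm A * ‖v‖ := by
  refine le_of_pow_le_pow_left₀ two_ne_zero (mul_nonneg (frobNorm_nonneg A) (norm_nonneg v)) ?_
  rw [mul_pow, sq_frobNorm, EuclideanSpace.norm_sq_eq, EuclideanSpace.norm_sq_eq, Finset.sum_mul]
  gcongr with i
  simp only [Real.norm_eq_abs, sq_abs, mulVecE_apply]
  exact Finset.sum_mul_sq_le_sq_mul_sq _ _ _

lemma norm_mulVecE_le_of_norm_le {M : ℝ} (A : Matrix (Fin m) (Fin n) ℝ)
    {v : EuclideanSpace ℝ (Fin n)} (hv : ‖v‖ ≤ M) : ‖mulVecE A v‖ ≤ M * frobNorm A :=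
  (norm_mulVecE_le A v).trans <| by
    rw [mul_comm M]; exact mul_le_mul_of_nonneg_left hv (frobNorm_nonneg A)

lemma inner_mulVecE_left (A : Matrix (Fin m) (Fin n) ℝ) (u : EuclideanSpace ℝ (Fin n))
    (w : EuclideanSpace ℝ (Fin m)) : ⟪mulVecE A u, w⟫ = ⟪u, mulVecE Aᵀ w⟫ := by
  simp only [PiLp.inner_apply, RCLike.inner_apply, conj_trivial, mulVecE_apply,
    Matrix.transpose_apply, Finset.sum_mul, Finset.mul_sum]
  rw [Finset.sum_comm]
  exact Finset.sum_congr rfl fun j _ => Finset.sum_congr rfl fun i _ => by ring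

lemma continuous_mulVecE :
    Continuous (Function.uncurry (mulVecE : Matrix (Fin m) (Fin n) ℝ → _ → _)) := by
  refine (PiLp.continuous_toLp ..).comp ?_
  exact continuous_fst.matrix_mulVec ((PiLp.continuous_ofLp ..).comp continuous_snd)

end Frobenius

section WeakConvergence

variable {α E : Type*} {mα : MeasurableSpace α} {μ : Measure α}
  [NormedAddCommGroup E] [InnerProductSpace ℝ E]

lemma integrable_inner_of_norm_le {M : ℝ} {u h : α → E} (hu : AEStronglyMeasurable u μ)
    (huM : ∀ᵐ t ∂μ, ‖u t‖ ≤ M) (hh : Integrable h μ) :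
    Integrable (fun t => ⟪u t, h t⟫) μ := by
  refine (hh.norm.const_mul M).mono' (hu.inner hh.1) ?_
  filter_upwards [huM] with t ht
  exact (norm_inner_le_norm _ _).trans (mul_le_mul_of_nonneg_right ht (norm_nonneg _))

lemma abs_integral_inner_le_of_norm_le {M : ℝ} {u h : α → E} (huM : ∀ᵐ t ∂μ, ‖u t‖ ≤ M)
    (hh : Integrable h μ) :
    |∫ t, ⟪u t, h t⟫ ∂μ| ≤ M * ∫ t, ‖h t‖ ∂μ := by
  rw [← Real.norm_eq_abs, ← integral_const_mul]
  refine norm_integral_le_of_norm_le (hh.norm.const_mul M) ?_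
  filter_upwards [huM] with t ht
  exact (norm_inner_le_norm _ _).trans (mul_le_mul_of_nonneg_right ht (norm_nonneg _))

lemma integrable_inner_of_memLp_two {f g : α → E} (hf : MemLp f 2 μ) (hg : MemLp g 2 μ) :
    Integrable (fun t => ⟪f t, g t⟫) μ :=
  (hf.norm.integrable_mul hg.norm).mono' (hf.1.inner hg.1)
    (.of_forall fun _ => norm_inner_le_norm _ _)

lemma tendsto_integral_inner_zero_of_tendsto_integral_norm_sq {F : ℕ → α → E} {w : α → E}
    (hF : ∀ ℓ, MemLp (F ℓ) 2 μ) (hw : MemLp w 2 μ)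
    (hF0 : Tendsto (fun ℓ => ∫ t, ‖F ℓ t‖ ^ 2 ∂μ) atTop (𝓝 0)) :
    Tendsto (fun ℓ => ∫ t, ⟪F ℓ t, w t⟫ ∂μ) atTop (𝓝 0) := by
  have hCS : ∀ ℓ, ‖∫ t, ⟪F ℓ t, w t⟫ ∂μ‖ ≤
      √(∫ t, ‖F ℓ t‖ ^ 2 ∂μ) * √(∫ t, ‖w t‖ ^ 2 ∂μ) := by
    intro ℓ
    have hHolder := integral_mul_norm_le_Lp_mul_Lq (p := 2) (q := 2) (μ := μ) .two_two
      (by simpa using hF ℓ) (by simpa using hw)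
    calc ‖∫ t, ⟪F ℓ t, w t⟫ ∂μ‖ ≤ ∫ t, ‖F ℓ t‖ * ‖w t‖ ∂μ :=
          norm_integral_le_of_norm_le ((hF ℓ).norm.integrable_mul hw.norm)
            (.of_forall fun _ => norm_inner_le_norm _ _)
      _ ≤ √(∫ t, ‖F ℓ t‖ ^ 2 ∂μ) * √(∫ t, ‖w t‖ ^ 2 ∂μ) := by
          simpa [Real.sqrt_eq_rpow] using hHolder
  refine squeeze_zero_norm hCS ?_
  simpa using ((Real.continuous_sqrt.tendsto 0).comp hF0).mul_const _

variable [IsFiniteMeasure μ]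

lemma ae_norm_le_of_weak_limit {M : ℝ} (hM : 0 ≤ M) {u : ℕ → α → E} {v : α → E}
    (hv : MemLp v 2 μ)
    (huM : ∀ ℓ, ∀ᵐ t ∂μ, ‖u ℓ t‖ ≤ M)
    (hweak : ∀ f : α → E, MemLp f 2 μ →
      Tendsto (fun ℓ => ∫ t, ⟪u ℓ t, f t⟫ ∂μ) atTop (𝓝 (∫ t, ⟪v t, f t⟫ ∂μ))) :
    ∀ᵐ t ∂μ, ‖v t‖ ≤ M := by
  obtain ⟨g, hg, hvg⟩ := hv.1
  set S := {t | M < ‖g t‖}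
  have hS : MeasurableSet S := measurableSet_lt measurable_const hg.norm.measurable
  set f := S.indicator g
  have hf : MemLp f 2 μ := (hv.ae_eq hvg).indicator hS
  have hf_int : Integrable f μ := hf.integrable one_le_two
  have hf_norm : Integrable (fun t => ‖f t‖) μ := hf_int.norm
  have hf_sq : Integrable (fun t => ‖f t‖ ^ 2) μ := hf.norm.integrable_sq
  have hvf : ∫ t, ⟪v t, f t⟫ ∂μ = ∫ t, ‖f t‖ ^ 2 ∂μ := by
    refine integral_congr_ae ?_
    filter_upwards [hvg] with t ht
    by_cases htS : t ∈ S
    · simp [f, ht, htS]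
    · simp [f, htS]
  have hle : ∫ t, ⟪v t, f t⟫ ∂μ ≤ M * ∫ t, ‖f t‖ ∂μ :=
    le_of_tendsto (hweak f hf) (.of_forall fun ℓ => (le_abs_self _).trans
      (abs_integral_inner_le_of_norm_le (huM ℓ) hf_int))
  have hnonneg : ∀ t, 0 ≤ ‖f t‖ * (‖f t‖ - M) := by
    intro t
    by_cases htS : t ∈ S
    · simp only [f, Set.indicator_of_mem htS]
      exact mul_nonneg (norm_nonneg _) (sub_nonneg.2 (le_of_lt htS))
    · simp [f, htS]
  have hzero : (fun t => ‖f t‖ * (‖f t‖ - M)) =ᵐ[μ] 0 := by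
    have hint : Integrable (fun t => ‖f t‖ * (‖f t‖ - M)) μ :=
      (hf_sq.sub (hf_norm.const_mul M)).congr
        (.of_forall fun t => by simp only [Pi.sub_apply]; ring)
    refine (integral_eq_zero_iff_of_nonneg hnonneg hint).1
      (le_antisymm ?_ (integral_nonneg hnonneg))
    calc ∫ t, ‖f t‖ * (‖f t‖ - M) ∂μ = ∫ t, ‖f t‖ ^ 2 ∂μ - M * ∫ t, ‖f t‖ ∂μ := by
          rw [← integral_const_mul, ← integral_sub hf_sq (hf_norm.const_mul M)]
          exact integral_congr_ae (.of_forall fun t => by ring)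
      _ ≤ 0 := by linarith
  filter_upwards [hzero, hvg] with t ht hvt
  rw [hvt]
  by_contra! htS
  have hft : f t = g t := Set.indicator_of_mem (s := S) htS g
  simp only [hft, Pi.zero_apply] at ht
  nlinarith [mul_pos (hM.trans_lt htS) (sub_pos.2 htS)]

lemma tendsto_integral_inner_of_weak_of_norm_le {M : ℝ} (hM : 0 ≤ M)
    {u : ℕ → α → E} {v : α → E}
    (hu : ∀ ℓ, AEStronglyMeasurable (u ℓ) μ) (hv : AEStronglyMeasurable v μ)
    (huM : ∀ ℓ, ∀ᵐ t ∂μ, ‖u ℓ t‖ ≤ M) (hvM : ∀ᵐ t ∂μ, ‖v t‖ ≤ M)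
    (hweak : ∀ f : α → E, MemLp f 2 μ →
      Tendsto (fun ℓ => ∫ t, ⟪u ℓ t, f t⟫ ∂μ) atTop (𝓝 (∫ t, ⟪v t, f t⟫ ∂μ)))
    {g : α → E} (hg : Integrable g μ) :
    Tendsto (fun ℓ => ∫ t, ⟪u ℓ t, g t⟫ ∂μ) atTop (𝓝 (∫ t, ⟪v t, g t⟫ ∂μ)) := by
  rw [Metric.tendsto_atTop]
  intro ε hε
  set δ := ε / (4 * (M + 1))
  have hδ : 0 < δ := by positivity
  have hMδ : 2 * M * δ < ε / 2 := by
    simp only [δ]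
    field_simp
    nlinarith
  obtain ⟨f, hgf, hf2⟩ := (memLp_one_iff_integrable.2 hg).exists_simpleFunc_eLpNorm_sub_lt
    ENNReal.one_ne_top (ENNReal.ofReal_pos.2 hδ).ne'
  have hgf_int : Integrable (g - ⇑f) μ := hg.sub (hf2.integrable le_rfl)
  have hgf_lt : ∫ t, ‖(g - ⇑f) t‖ ∂μ < δ := by
    rw [integral_norm_eq_lintegral_enorm hgf_int.1, ← eLpNorm_one_eq_lintegral_enorm]
    exact ENNReal.toReal_lt_of_lt_ofReal hgf
  have hsplit : ∀ w : α → E, AEStronglyMeasurable w μ → (∀ᵐ t ∂μ, ‖w t‖ ≤ M) →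
      ∫ t, ⟪w t, g t⟫ ∂μ = ∫ t, ⟪w t, f t⟫ ∂μ + ∫ t, ⟪w t, (g - ⇑f) t⟫ ∂μ := by
    intro w hw hwM
    rw [← integral_add (integrable_inner_of_norm_le hw hwM (hf2.integrable le_rfl))
      (integrable_inner_of_norm_le hw hwM hgf_int)]
    simp only [← inner_add_right, Pi.sub_apply, add_sub_cancel]
  obtain ⟨N, hN⟩ := Metric.tendsto_atTop.1
    (hweak f (f.memLp_of_isFiniteMeasure 2 μ)) (ε / 2) (half_pos hε)
  refine ⟨N, fun ℓ hℓ => ?_⟩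
  have hu_err := abs_integral_inner_le_of_norm_le (huM ℓ) hgf_int
  have hv_err := abs_integral_inner_le_of_norm_le hvM hgf_int
  have hMerr : M * ∫ t, ‖(g - ⇑f) t‖ ∂μ ≤ M * δ := mul_le_mul_of_nonneg_left hgf_lt.le hM
  have hf_close := hN ℓ hℓ
  rw [Real.dist_eq] at hf_close ⊢
  rw [hsplit _ (hu ℓ) (huM ℓ), hsplit _ hv hvM, abs_lt]
  obtain ⟨h₁, h₂⟩ := abs_lt.1 hf_close
  obtain ⟨h₃, h₄⟩ := abs_le.1 hu_err
  obtain ⟨h₅, h₆⟩ := abs_le.1 hv_err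
  constructor <;> linarith

end WeakConvergence

section MatrixFunctions

variable {α : Type*} {mα : MeasurableSpace α} {μ : Measure α} {m n : ℕ}

lemma memLp_frobNorm {A : α → Matrix (Fin m) (Fin n) ℝ} (hA : AEStronglyMeasurable A μ)
    (hA2 : Integrable (fun t => frobNorm (A t) ^ 2) μ) :
    MemLp (fun t => frobNorm (A t)) 2 μ :=
  (memLp_two_iff_integrable_sq (continuous_frobNorm.comp_aestronglyMeasurable hA)).2 hA2

lemma integrable_sq_frobNorm_sub {A B : α → Matrix (Fin m) (Fin n) ℝ}
    (hA : AEStronglyMeasurable A μ) (hB : AEStronglyMeasurable B μ)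
    (hA2 : Integrable (fun t => frobNorm (A t) ^ 2) μ)
    (hB2 : Integrable (fun t => frobNorm (B t) ^ 2) μ) :
    Integrable (fun t => frobNorm (A t - B t) ^ 2) μ := by
  refine ((hA2.const_mul 2).add (hB2.const_mul 2)).mono'
    ((continuous_frobNorm.comp_aestronglyMeasurable (hA.sub hB)).pow 2) (.of_forall fun t => ?_)
  rw [Real.norm_of_nonneg (sq_nonneg _)]
  exact sq_frobNorm_sub_le _ _

lemma integrable_mulVecE_transpose {A : α → Matrix (Fin m) (Fin n) ℝ}
    {w : α → EuclideanSpace ℝ (Fin m)} (hA : AEStronglyMeasurable A μ)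
    (hA2 : Integrable (fun t => frobNorm (A t) ^ 2) μ) (hw : MemLp w 2 μ) :
    Integrable (fun t => mulVecE (A t)ᵀ (w t)) μ := by
  refine ((memLp_frobNorm hA hA2).integrable_mul hw.norm).mono'
    (continuous_mulVecE.comp_aestronglyMeasurable₂
      (continuous_id.matrix_transpose.comp_aestronglyMeasurable hA) hw.1)
    (.of_forall fun t => ?_)
  simpa [frobNorm_transpose] using norm_mulVecE_le (A t)ᵀ (w t)

lemma memLp_mulVecE_of_norm_le {M : ℝ} {A : α → Matrix (Fin m) (Fin n) ℝ}
    {u : α → EuclideanSpace ℝ (Fin n)} (hA : AEStronglyMeasurable A μ)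
    (hA2 : Integrable (fun t => frobNorm (A t) ^ 2) μ) (hu : AEStronglyMeasurable u μ)
    (huM : ∀ᵐ t ∂μ, ‖u t‖ ≤ M) :
    MemLp (fun t => mulVecE (A t) (u t)) 2 μ :=
  (memLp_frobNorm hA hA2).of_le_mul (continuous_mulVecE.comp_aestronglyMeasurable₂ hA hu)
    (by filter_upwards [huM] with t ht
        rw [Real.norm_of_nonneg (frobNorm_nonneg _)]
        exact norm_mulVecE_le_of_norm_le _ ht)

lemma tendsto_integral_inner_mulVecE_zero {M : ℝ} {B : ℕ → α → Matrix (Fin m) (Fin n) ℝ}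
    {u : ℕ → α → EuclideanSpace ℝ (Fin n)} {w : α → EuclideanSpace ℝ (Fin m)}
    (hB : ∀ ℓ, AEStronglyMeasurable (B ℓ) μ)
    (hB2 : ∀ ℓ, Integrable (fun t => frobNorm (B ℓ t) ^ 2) μ)
    (hB0 : Tendsto (fun ℓ => ∫ t, frobNorm (B ℓ t) ^ 2 ∂μ) atTop (𝓝 0))
    (hu : ∀ ℓ, AEStronglyMeasurable (u ℓ) μ) (huM : ∀ ℓ, ∀ᵐ t ∂μ, ‖u ℓ t‖ ≤ M)
    (hw : MemLp w 2 μ) :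
    Tendsto (fun ℓ => ∫ t, ⟪mulVecE (B ℓ t) (u ℓ t), w t⟫ ∂μ) atTop (𝓝 0) := by
  have hBu := fun ℓ => memLp_mulVecE_of_norm_le (hB ℓ) (hB2 ℓ) (hu ℓ) (huM ℓ)
  refine tendsto_integral_inner_zero_of_tendsto_integral_norm_sq hBu hw ?_
  refine squeeze_zero (fun ℓ => integral_nonneg fun t => sq_nonneg _) (fun ℓ => ?_)
    (by simpa using hB0.const_mul (M ^ 2))
  rw [← integral_const_mul]
  refine integral_mono_ae (hBu ℓ).norm.integrable_sq ((hB2 ℓ).const_mul _) ?_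
  filter_upwards [huM ℓ] with t ht
  rw [← mul_pow]
  exact pow_le_pow_left₀ (norm_nonneg _) (norm_mulVecE_le_of_norm_le _ ht) 2

end MatrixFunctions

theorem stmt9_general
    (m n : ℕ) (t0 tf M : ℝ) (hM : 0 ≤ M)
    (Al : ℕ → ℝ → Matrix (Fin m) (Fin n) ℝ) (At : ℝ → Matrix (Fin m) (Fin n) ℝ)
    -- `A_ℓ, Ã ∈ L²(t₀,t_f;ℝ^{m×n})`
    (hAlmeas : ∀ ℓ, AEStronglyMeasurable (Al ℓ) (volume.restrict (Ioc t0 tf)))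
    (hAtmeas : AEStronglyMeasurable At (volume.restrict (Ioc t0 tf)))
    (hAlL2 : ∀ ℓ, Integrable (fun t => frobNorm (Al ℓ t) ^ 2) (volume.restrict (Ioc t0 tf)))
    (hAtL2 : Integrable (fun t => frobNorm (At t) ^ 2) (volume.restrict (Ioc t0 tf)))
    -- `A_ℓ → Ã` strongly in `L²`
    (hAconv : Tendsto (fun ℓ => ∫ t in Ioc t0 tf, frobNorm (Al ℓ t - At t) ^ 2)
      atTop (𝓝 0))
    (ul : ℕ → ℝ → EuclideanSpace ℝ (Fin n)) (ut : ℝ → EuclideanSpace ℝ (Fin n))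
    (hul : ∀ ℓ, MemLp (ul ℓ) 2 (volume.restrict (Ioc t0 tf)))
    (hut : MemLp ut 2 (volume.restrict (Ioc t0 tf)))
    -- `‖u_ℓ(t)‖₂ ≤ M` a.e.
    (hbound : ∀ ℓ, ∀ᵐ t ∂(volume.restrict (Ioc t0 tf)), ‖ul ℓ t‖ ≤ M)
    -- `u_ℓ ⇀ ũ` weakly in `L²`
    (hweak : ∀ v : ℝ → EuclideanSpace ℝ (Fin n),
      MemLp v 2 (volume.restrict (Ioc t0 tf)) →
      Tendsto (fun ℓ => ∫ t, ⟪ul ℓ t, v t⟫ ∂(volume.restrict (Ioc t0 tf))) atTop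
        (𝓝 (∫ t, ⟪ut t, v t⟫ ∂(volume.restrict (Ioc t0 tf))))) :
    -- conclusion: `A_ℓ u_ℓ ⇀ Ã ũ` weakly in `L²`
    ∀ w : ℝ → EuclideanSpace ℝ (Fin m),
      MemLp w 2 (volume.restrict (Ioc t0 tf)) →
      Tendsto (fun ℓ => ∫ t, ⟪mulVecE (Al ℓ t) (ul ℓ t), w t⟫
          ∂(volume.restrict (Ioc t0 tf))) atTop
        (𝓝 (∫ t, ⟪mulVecE (At t) (ut t), w t⟫ ∂(volume.restrict (Ioc t0 tf)))) := by
  intro w hw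
  set μ := volume.restrict (Ioc t0 tf)
  have : IsFiniteMeasure μ := isFiniteMeasure_restrict.2 measure_Ioc_lt_top.ne
  have hutM : ∀ᵐ t ∂μ, ‖ut t‖ ≤ M := ae_norm_le_of_weak_limit hM hut hbound hweak
  set g := fun t => mulVecE (At t)ᵀ (w t)
  have hg : Integrable g μ := integrable_mulVecE_transpose hAtmeas hAtL2 hw
  have hD : ∀ ℓ, AEStronglyMeasurable (fun t => Al ℓ t - At t) μ := fun ℓ =>
    (hAlmeas ℓ).sub hAtmeas
  have hD2 : ∀ ℓ, Integrable (fun t => frobNorm (Al ℓ t - At t) ^ 2) μ := fun ℓ =>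
    integrable_sq_frobNorm_sub (hAlmeas ℓ) hAtmeas (hAlL2 ℓ) hAtL2
  have hF : ∀ ℓ, MemLp (fun t => mulVecE (Al ℓ t - At t) (ul ℓ t)) 2 μ := fun ℓ =>
    memLp_mulVecE_of_norm_le (hD ℓ) (hD2 ℓ) (hul ℓ).1 (hbound ℓ)
  have hstrong : Tendsto (fun ℓ => ∫ t, ⟪mulVecE (Al ℓ t - At t) (ul ℓ t), w t⟫ ∂μ)
      atTop (𝓝 0) :=
    tendsto_integral_inner_mulVecE_zero hD hD2 hAconv (fun ℓ => (hul ℓ).1) hbound hw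
  have hweak_g : Tendsto (fun ℓ => ∫ t, ⟪ul ℓ t, g t⟫ ∂μ) atTop (𝓝 (∫ t, ⟪ut t, g t⟫ ∂μ)) :=
    tendsto_integral_inner_of_weak_of_norm_le hM (fun ℓ => (hul ℓ).1) hut.1 hbound hutM hweak hg
  have hsplit : ∀ ℓ, ∫ t, ⟪mulVecE (Al ℓ t) (ul ℓ t), w t⟫ ∂μ =
      ∫ t, ⟪mulVecE (Al ℓ t - At t) (ul ℓ t), w t⟫ ∂μ + ∫ t, ⟪ul ℓ t, g t⟫ ∂μ := by
    intro ℓ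
    rw [← integral_add (integrable_inner_of_memLp_two (hF ℓ) hw)
      (integrable_inner_of_norm_le (hul ℓ).1 (hbound ℓ) hg)]
    congr with t
    rw [sub_mulVecE, inner_sub_left, inner_mulVecE_left (At t) (ul ℓ t)]
    ring
  have hlimit : ∫ t, ⟪mulVecE (At t) (ut t), w t⟫ ∂μ = ∫ t, ⟪ut t, g t⟫ ∂μ := by
    simp only [g, inner_mulVecE_left]
  simpa [hsplit, hlimit] using hstrong.add hweak_g

/-- strong `L²` convergence of the matrices times weak `L²`
convergence of uniformly bounded vectors gives weak `L²` convergence of the products. -/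
theorem stmt9
    (m n : ℕ) (t0 tf M : ℝ) (ht : t0 < tf) (hM : 0 ≤ M)
    (Al : ℕ → ℝ → Matrix (Fin m) (Fin n) ℝ) (At : ℝ → Matrix (Fin m) (Fin n) ℝ)
    -- `A_ℓ, Ã ∈ L²(t₀,t_f;ℝ^{m×n})`
    (hAlmeas : ∀ ℓ, AEStronglyMeasurable (Al ℓ) (volume.restrict (Ioc t0 tf)))
    (hAtmeas : AEStronglyMeasurable At (volume.restrict (Ioc t0 tf)))
    (hAlL2 : ∀ ℓ, Integrable (fun t => frobNorm (Al ℓ t) ^ 2) (volume.restrict (Ioc t0 tf)))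
    (hAtL2 : Integrable (fun t => frobNorm (At t) ^ 2) (volume.restrict (Ioc t0 tf)))
    -- `A_ℓ → Ã` strongly in `L²`
    (hAconv : Tendsto (fun ℓ => ∫ t in Ioc t0 tf, frobNorm (Al ℓ t - At t) ^ 2)
      atTop (𝓝 0))
    (ul : ℕ → ℝ → EuclideanSpace ℝ (Fin n)) (ut : ℝ → EuclideanSpace ℝ (Fin n))
    (hul : ∀ ℓ, MemLp (ul ℓ) 2 (volume.restrict (Ioc t0 tf)))
    (hut : MemLp ut 2 (volume.restrict (Ioc t0 tf)))
    -- `‖u_ℓ(t)‖₂ ≤ M` a.e.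
    (hbound : ∀ ℓ, ∀ᵐ t ∂(volume.restrict (Ioc t0 tf)), ‖ul ℓ t‖ ≤ M)
    -- `u_ℓ ⇀ ũ` weakly in `L²`
    (hweak : ∀ v : ℝ → EuclideanSpace ℝ (Fin n),
      MemLp v 2 (volume.restrict (Ioc t0 tf)) →
      Tendsto (fun ℓ => ∫ t, ⟪ul ℓ t, v t⟫ ∂(volume.restrict (Ioc t0 tf))) atTop
        (𝓝 (∫ t, ⟪ut t, v t⟫ ∂(volume.restrict (Ioc t0 tf))))) :
    -- conclusion: `A_ℓ u_ℓ ⇀ Ã ũ` weakly in `L²`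
    ∀ w : ℝ → EuclideanSpace ℝ (Fin m),
      MemLp w 2 (volume.restrict (Ioc t0 tf)) →
      Tendsto (fun ℓ => ∫ t, ⟪mulVecE (Al ℓ t) (ul ℓ t), w t⟫
          ∂(volume.restrict (Ioc t0 tf))) atTop
        (𝓝 (∫ t, ⟪mulVecE (At t) (ut t), w t⟫ ∂(volume.restrict (Ioc t0 tf)))) :=
  stmt9_general m n t0 tf M hM Al At hAlmeas hAtmeas hAlL2 hAtL2 hAconv ul ut hul hut hbound hweak
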